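/- Let Θ be a real m × p matrix, Y ∈ ℝᵐ, ν > 0, λ > 0, and let R : ℝᵖ → ℝ be convex. Define q(W) = min over ξ ∈ ℝᵖ of (1/2)‖Y − Θξ‖² + (1/(2ν))‖ξ − W‖², p(W) = q(W) + λR(W), and ξ*(W) = (ΘᵀΘ + (1/ν)I)⁻¹(ΘᵀY + (1/ν)W). For any W ∈ ℝᵖ, let W⁺ be the unique minimizer of w ↦ λR(w) + (1/(2ν))‖w − ξ*(W)‖². Then p(W⁺) ≤ p(W) − (1/(2ν))‖W⁺ − W‖². -/

import Mathlib

open Matrix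

open Set Filter Topology RealInnerProductSpace

/-!
At `ξ*(W)` the normal equations `Θᵀ(Y - Θξ*) = (ξ* - W)/ν` hold, so the inner minimum defining
`q(W)` is attained there, while `q(W⁺)` is at most the same loss evaluated at `ξ*(W)` with `W⁺` in
place of `W`. The prox objective `λR + (1/2ν)‖· - ξ*‖²` is `(1/ν)`-strongly convex, so its
minimizer `W⁺` beats every `W` by `(1/2ν)‖W⁺ - W‖²`; adding the two estimates gives the decrease.
-/

theorem StrongConvexOn.add_sq_norm_sub_le_of_isMinOn {E : Type*} [NormedAddCommGroup E]
    [NormedSpace ℝ E] {s : Set E} {m : ℝ} {f : E → ℝ} {x y : E} (hf : StrongConvexOn s m f)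
    (hmin : IsMinOn f s x) (hx : x ∈ s) (hy : y ∈ s) :
    f x + m / 2 * ‖x - y‖ ^ 2 ≤ f y := by
  have hsegment : ∀ t ∈ Ioo (0 : ℝ) 1, f x + m / 2 * (1 - t) * ‖x - y‖ ^ 2 ≤ f y := by
    rintro t ⟨ht0, ht1⟩
    have hconv := hf.2 hx hy (sub_nonneg.2 ht1.le) ht0.le (sub_add_cancel 1 t)
    have hle : f x ≤ f ((1 - t) • x + t • y) :=
      hmin (hf.1 hx hy (sub_nonneg.2 ht1.le) ht0.le (sub_add_cancel 1 t))
    simp only [smul_eq_mul] at hconv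
    have : t * (f x + m / 2 * (1 - t) * ‖x - y‖ ^ 2) ≤ t * f y := by linarith
    exact le_of_mul_le_mul_left this ht0
  have hlim : Tendsto (fun t : ℝ ↦ f x + m / 2 * (1 - t) * ‖x - y‖ ^ 2) (𝓝[>] 0)
      (𝓝 (f x + m / 2 * (1 - 0) * ‖x - y‖ ^ 2)) :=
    (Continuous.tendsto (by fun_prop) 0).mono_left nhdsWithin_le_nhds
  simpa using le_of_tendsto hlim (eventually_of_mem (Ioo_mem_nhdsGT one_pos) hsegment)

theorem ConvexOn.strongConvexOn_add_sq_norm_sub {E : Type*} [NormedAddCommGroup E]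
    [InnerProductSpace ℝ E] {g : E → ℝ} (hg : ConvexOn ℝ univ g) (m : ℝ) (z : E) :
    StrongConvexOn univ m fun w ↦ g w + m / 2 * ‖w - z‖ ^ 2 := by
  rw [strongConvexOn_iff_convex]
  have hlin : ConvexOn ℝ univ ((-m) • innerₛₗ ℝ z) := LinearMap.convexOn _ convex_univ
  refine ((hg.add hlin).add_const (m / 2 * ‖z‖ ^ 2)).congr fun w _ ↦ ?_
  simp only [norm_sub_sq_real, Pi.add_apply, LinearMap.smul_apply, coe_innerₛₗ_apply, smul_eq_mul,
    real_inner_comm z w]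
  ring

theorem Matrix.posDef_transpose_mul_self_add_smul_one {ι κ : Type*} [Fintype ι] [Fintype κ]
    [DecidableEq κ] (Θ : Matrix ι κ ℝ) {c : ℝ} (hc : 0 < c) :
    (Θᵀ * Θ + c • (1 : Matrix κ κ ℝ)).PosDef := by
  have hΘ : (Θᵀ * Θ).PosSemidef := by
    simpa only [conjTranspose_eq_transpose_of_trivial] using posSemidef_conjTranspose_mul_self Θ
  exact PosDef.posSemidef_add hΘ (PosDef.one.smul hc)

section LeastSquares

variable {ι κ : Type*} [Fintype ι] [Fintype κ] [DecidableEq κ]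

noncomputable def sr3Loss (Θ : Matrix ι κ ℝ) (Y : EuclideanSpace ℝ ι) (ν : ℝ)
    (W ξ : EuclideanSpace ℝ κ) : ℝ :=
  1 / 2 * ‖Y - toEuclideanLin Θ ξ‖ ^ 2 + 1 / (2 * ν) * ‖ξ - W‖ ^ 2

variable (Θ : Matrix ι κ ℝ) (Y : EuclideanSpace ℝ ι) {ν : ℝ} {W ξ : EuclideanSpace ℝ κ}

theorem sr3Loss_nonneg (hν : 0 ≤ ν) (W ξ : EuclideanSpace ℝ κ) : 0 ≤ sr3Loss Θ Y ν W ξ := by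
  unfold sr3Loss; positivity

theorem iInf_sr3Loss_le (hν : 0 ≤ ν) (W ξ : EuclideanSpace ℝ κ) :
    ⨅ ζ, sr3Loss Θ Y ν W ζ ≤ sr3Loss Θ Y ν W ξ :=
  ciInf_le ⟨0, forall_mem_range.2 (sr3Loss_nonneg Θ Y hν W)⟩ ξ

variable [DecidableEq ι]

theorem toEuclideanLin_transpose_sub_eq_smul {c : ℝ} (hc : 0 < c)
    (hξ : ξ = toEuclideanLin (Θᵀ * Θ + c • (1 : Matrix κ κ ℝ))⁻¹
      (toEuclideanLin Θᵀ Y + c • W)) :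
    toEuclideanLin Θᵀ (Y - toEuclideanLin Θ ξ) = c • (ξ - W) := by
  have hdet := (Θ.posDef_transpose_mul_self_add_smul_one hc).det_pos.ne'.isUnit
  have hnormal : toEuclideanLin (Θᵀ * Θ + c • 1) ξ = toEuclideanLin Θᵀ Y + c • W := by
    rw [hξ, ← LinearMap.comp_apply, ← toLpLin_mul_same, mul_nonsing_inv _ hdet, toLpLin_one,
      LinearMap.id_apply]
  simp only [map_add, map_smul, toLpLin_mul_same, toLpLin_one, LinearMap.add_apply,
    LinearMap.smul_apply, LinearMap.comp_apply, LinearMap.id_apply] at hnormal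
  rw [map_sub]
  linear_combination (norm := module) (-1 : ℝ) • hnormal

theorem sr3Loss_eq_add_of_normal
    (hnormal : toEuclideanLin Θᵀ (Y - toEuclideanLin Θ ξ) = (1 / ν) • (ξ - W))
    (ζ : EuclideanSpace ℝ κ) :
    sr3Loss Θ Y ν W ζ = sr3Loss Θ Y ν W ξ + 1 / 2 * ‖toEuclideanLin Θ (ζ - ξ)‖ ^ 2
      + 1 / (2 * ν) * ‖ζ - ξ‖ ^ 2 := by
  have hinner : ⟪Y - toEuclideanLin Θ ξ, toEuclideanLin Θ (ζ - ξ)⟫ = 1 / ν * ⟪ξ - W, ζ - ξ⟫ := by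
    rw [← LinearMap.adjoint_inner_left, ← toEuclideanLin_conjTranspose_eq_adjoint,
      conjTranspose_eq_transpose_of_trivial, hnormal, real_inner_smul_left]
  have hres : Y - toEuclideanLin Θ ζ = (Y - toEuclideanLin Θ ξ) - toEuclideanLin Θ (ζ - ξ) := by
    rw [map_sub]; abel
  have hdist : ζ - W = (ξ - W) + (ζ - ξ) := by abel
  rw [sr3Loss, sr3Loss, hres, hdist, norm_sub_sq_real, norm_add_sq_real, hinner]
  ring

theorem iInf_sr3Loss_eq_of_normal (hν : 0 ≤ ν)
    (hnormal : toEuclideanLin Θᵀ (Y - toEuclideanLin Θ ξ) = (1 / ν) • (ξ - W)) :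
    ⨅ ζ, sr3Loss Θ Y ν W ζ = sr3Loss Θ Y ν W ξ := by
  refine IsGLB.ciInf_eq (IsLeast.isGLB ⟨mem_range_self ξ, forall_mem_range.2 fun ζ ↦ ?_⟩)
  rw [sr3Loss_eq_add_of_normal Θ Y hnormal ζ]
  have : 0 ≤ 1 / 2 * ‖toEuclideanLin Θ (ζ - ξ)‖ ^ 2 + 1 / (2 * ν) * ‖ζ - ξ‖ ^ 2 := by positivity
  linarith

end LeastSquares

/-- Per-iteration sufficient decrease for SR3: with
q(W) = min_ξ (1/2)‖Y − Θξ‖² + (1/(2ν))‖ξ − W‖², P(W) = q(W) + λR(W),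
ξ*(W) = (ΘᵀΘ + (1/ν)I)⁻¹(ΘᵀY + (1/ν)W), and W⁺ the (unique) minimizer of
w ↦ λR(w) + (1/(2ν))‖w − ξ*(W)‖², we have P(W⁺) ≤ P(W) − (1/(2ν))‖W⁺ − W‖². -/
theorem stmt14 (m p : ℕ) (Θ : Matrix (Fin m) (Fin p) ℝ)
    (Y : EuclideanSpace ℝ (Fin m)) (ν lam : ℝ) (hν : 0 < ν) (hlam : 0 < lam)
    (R : EuclideanSpace ℝ (Fin p) → ℝ) (hR : ConvexOn ℝ Set.univ R)
    (q P : EuclideanSpace ℝ (Fin p) → ℝ)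
    (hq : ∀ W, q W = ⨅ ξ : EuclideanSpace ℝ (Fin p),
      ((1 / 2) * ‖Y - Matrix.toEuclideanLin Θ ξ‖ ^ 2 + (1 / (2 * ν)) * ‖ξ - W‖ ^ 2))
    (hP : ∀ W, P W = q W + lam * R W)
    (ξstar : EuclideanSpace ℝ (Fin p) → EuclideanSpace ℝ (Fin p))
    (hξstar : ∀ W, ξstar W =
      Matrix.toEuclideanLin ((Θᵀ * Θ + (1 / ν) • (1 : Matrix (Fin p) (Fin p) ℝ))⁻¹)
        (Matrix.toEuclideanLin Θᵀ Y + (1 / ν) • W))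
    (W Wplus : EuclideanSpace ℝ (Fin p))
    (hWplus : ∀ w : EuclideanSpace ℝ (Fin p),
      lam * R Wplus + (1 / (2 * ν)) * ‖Wplus - ξstar W‖ ^ 2 ≤
      lam * R w + (1 / (2 * ν)) * ‖w - ξstar W‖ ^ 2) :
    P Wplus ≤ P W - (1 / (2 * ν)) * ‖Wplus - W‖ ^ 2 := by
  set ξs := ξstar W
  have hnormal : toEuclideanLin Θᵀ (Y - toEuclideanLin Θ ξs) = (1 / ν) • (ξs - W) :=
    toEuclideanLin_transpose_sub_eq_smul Θ Y (one_div_pos.2 hν) (hξstar W)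
  have hqLoss : ∀ W, q W = ⨅ ξ, sr3Loss Θ Y ν W ξ := hq
  have hqW : q W = sr3Loss Θ Y ν W ξs :=
    (hqLoss W).trans (iInf_sr3Loss_eq_of_normal Θ Y hν.le hnormal)
  have hqWplus : q Wplus ≤ sr3Loss Θ Y ν Wplus ξs :=
    (hqLoss Wplus).trans_le (iInf_sr3Loss_le Θ Y hν.le Wplus ξs)
  have hc : 1 / (2 * ν) = 1 / ν / 2 := by ring
  have hprox := ((hR.smul hlam.le).strongConvexOn_add_sq_norm_sub (1 / ν) ξs)
    |>.add_sq_norm_sub_le_of_isMinOn (isMinOn_univ_iff.2 fun w ↦ by simpa [hc] using hWplus w)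
      (mem_univ Wplus) (mem_univ W)
  simp only [smul_eq_mul, ← hc] at hprox
  rw [sr3Loss, norm_sub_rev ξs] at hqWplus
  rw [hP, hP, hqW, sr3Loss, norm_sub_rev ξs]
  linarith
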